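/- arXiv:2408.06862 — 3 statements merged into one kernel-verified Lean document; each statement's English description precedes it below -/
import Mathlib

section
/- Let c ∈ ℝ, let Y be a random variable on (0,∞) with density g satisfying ess sup_{y>0} y^{2c-1} g(y) =: G < ∞, and let h : (0,∞) → ℝ be measurable with E[h(Y)²] < ∞. Then ∫_ℝ |E[Y^{c-1+2πit} h(Y)]|² dt ≤ G · E[h(Y)²]. -/
/-!
Substituting `y = e^{-x}` turns the Mellin transform of `f` on the line `Re s = c` into the
Fourier transform of `u x = e^{-cx} f(e^{-x})`, and turns `∫ |u|²` into `∫_{y>0} y^{2c-1} |f y|²`.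
Plancherel's theorem for `u ∈ L¹ ∩ L²` therefore gives the Mellin–Plancherel identity, which we
apply to `f = g h`; the essential bound `y^{2c-1} g(y) ≤ G` then yields
`y^{2c-1} g² h² ≤ G g h²`. Plancherel for `L¹ ∩ L²` comes from the `L²` Fourier transform, which
agrees a.e. with the Fourier integral because both define the same tempered distribution
(self-adjointness of the Fourier integral against Schwartz test functions).
-/

open MeasureTheory Set FourierTransform Real Complex SchwartzMap

theorem MeasureTheory.Lp.integral_norm_sq_eq {α E : Type*} [MeasurableSpace α] {μ : Measure α}
    [NormedAddCommGroup E] (F : Lp E 2 μ) : ∫ x, ‖F x‖ ^ 2 ∂μ = ‖F‖ ^ 2 := by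
  rw [Lp.norm_def, (Lp.memLp F).eLpNorm_eq_integral_rpow_norm two_ne_zero ENNReal.ofNat_ne_top,
    ENNReal.toReal_ofReal (by positivity), ENNReal.toReal_ofNat, ← one_div, ← Real.sqrt_eq_rpow,
    Real.sq_sqrt (integral_nonneg fun _ => by positivity)]
  simp only [Real.rpow_two]

section Plancherel

variable {V F : Type*} [NormedAddCommGroup V] [InnerProductSpace ℝ V] [FiniteDimensional ℝ V]
  [MeasurableSpace V] [BorelSpace V] [NormedAddCommGroup F] [InnerProductSpace ℂ F]
  [CompleteSpace F]

theorem MeasureTheory.MemLp.coeFn_fourier_toLp_ae_eq {f : V → F} (hf : Integrable f)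
    (hf2 : MemLp f 2) : ((𝓕 (hf2.toLp f) : Lp F 2) : V → F) =ᵐ[volume] 𝓕 f := by
  have hcont : Continuous (𝓕 f) :=
    VectorFourier.fourierIntegral_continuous Real.continuous_fourierChar
      (innerSL ℝ).continuous₂ hf
  refine ae_eq_of_integral_contDiff_smul_eq
    ((Lp.memLp _).locallyIntegrable one_le_two) hcont.locallyIntegrable ?_
  intro g g_smooth g_cpt
  have hg₁ : HasCompactSupport (Complex.ofRealCLM ∘ g) := g_cpt.comp_left rfl
  have hg₂ : ContDiff ℝ (⊤ : ℕ∞) (Complex.ofRealCLM ∘ g) := by fun_prop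
  set φ := hg₁.toSchwartzMap hg₂
  calc ∫ x, g x • (𝓕 (hf2.toLp f)) x = Lp.toTemperedDistribution (𝓕 (hf2.toLp f)) φ := by
        simp [φ]
    _ = ∫ x, 𝓕 φ x • f x := by
        rw [← Lp.fourier_toTemperedDistribution_eq, TemperedDistribution.fourier_apply,
          Lp.toTemperedDistribution_apply]
        refine integral_congr_ae ?_
        filter_upwards [hf2.coeFn_toLp] with x hx
        rw [hx]
    _ = ∫ x, φ x • 𝓕 f x := by
        simpa using! VectorFourier.integral_fourierIntegral_smul_eq_flip (L := innerₗ V)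
          Real.continuous_fourierChar continuous_inner φ.integrable hf
    _ = ∫ x, g x • 𝓕 f x := by simp [φ]

theorem integral_norm_sq_fourier {f : V → F} (hf : Integrable f) (hf2 : MemLp f 2) :
    ∫ ξ, ‖𝓕 f ξ‖ ^ 2 = ∫ x, ‖f x‖ ^ 2 := calc
  ∫ ξ, ‖𝓕 f ξ‖ ^ 2 = ∫ ξ, ‖(𝓕 (hf2.toLp f) : Lp F 2 (volume : Measure V)) ξ‖ ^ 2 :=
    integral_congr_ae ((hf2.coeFn_fourier_toLp_ae_eq hf).symm.fun_comp (‖·‖ ^ 2))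
  _ = ‖hf2.toLp f‖ ^ 2 := by rw [Lp.integral_norm_sq_eq, Lp.norm_fourier_eq]
  _ = ∫ x, ‖f x‖ ^ 2 := by
    rw [← Lp.integral_norm_sq_eq]
    exact integral_congr_ae (hf2.coeFn_toLp.fun_comp (‖·‖ ^ 2))

end Plancherel

section ChangeOfVariables

variable {E : Type*} [NormedAddCommGroup E] [NormedSpace ℝ E]

theorem integrable_exp_smul_comp_exp_iff (g : ℝ → E) :
    Integrable (fun x => rexp x • g (rexp x)) ↔ IntegrableOn g (Ioi 0) := by
  rw [← Real.range_exp, ← image_univ, integrableOn_image_iff_integrableOn_abs_deriv_smul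
    MeasurableSet.univ (fun x _ => (Real.hasDerivAt_exp x).hasDerivWithinAt)
    Real.exp_injective.injOn, integrableOn_univ]
  simp only [abs_of_pos (Real.exp_pos _)]

theorem integral_exp_smul_comp_exp (g : ℝ → E) :
    ∫ x, rexp x • g (rexp x) = ∫ y in Ioi 0, g y := by
  rw [← Real.range_exp, ← image_univ, integral_image_eq_integral_abs_deriv_smul
    MeasurableSet.univ (fun x _ => (Real.hasDerivAt_exp x).hasDerivWithinAt)
    Real.exp_injective.injOn, Measure.restrict_univ]
  simp only [abs_of_pos (Real.exp_pos _)]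

theorem integrable_exp_neg_smul_comp_exp_neg_iff (g : ℝ → E) :
    Integrable (fun x => rexp (-x) • g (rexp (-x))) ↔ IntegrableOn g (Ioi 0) := by
  rw [← integrable_exp_smul_comp_exp_iff]
  exact ⟨fun h => by simpa using h.comp_neg, fun h => h.comp_neg⟩

theorem integral_exp_neg_smul_comp_exp_neg (g : ℝ → E) :
    ∫ x, rexp (-x) • g (rexp (-x)) = ∫ y in Ioi 0, g y := by
  rw [← integral_exp_smul_comp_exp, integral_neg_eq_self (fun x => rexp x • g (rexp x))]

end ChangeOfVariables

section Mellin

variable {E : Type*} [NormedAddCommGroup E] [NormedSpace ℂ E]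

theorem exp_neg_smul_cpow_smul_comp_exp_neg (f : ℝ → E) (c x : ℝ) :
    rexp (-x) • (((rexp (-x) : ℝ) : ℂ) ^ ((c : ℂ) - 1) • f (rexp (-x)))
      = rexp (-c * x) • f (rexp (-x)) := by
  rw [show (c : ℂ) - 1 = ((c - 1 : ℝ) : ℂ) by push_cast; rfl,
    ← Complex.ofReal_cpow (Real.exp_pos _).le, Complex.coe_smul, smul_smul, ← Real.exp_mul,
    ← Real.exp_add]
  ring_nf

theorem exp_neg_mul_rpow_mul_norm_sq_comp_exp_neg (f : ℝ → E) (c x : ℝ) :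
    rexp (-x) • (rexp (-x) ^ (2 * c - 1) * ‖f (rexp (-x))‖ ^ 2)
      = ‖rexp (-c * x) • f (rexp (-x))‖ ^ 2 := by
  rw [norm_smul, mul_pow, Real.norm_of_nonneg (Real.exp_pos _).le, smul_eq_mul, ← mul_assoc,
    ← Real.exp_mul, ← Real.exp_add, ← Real.exp_nat_mul]
  ring_nf

theorem integral_norm_sq_exp_smul_comp_exp_neg (f : ℝ → E) (c : ℝ) :
    ∫ x, ‖rexp (-c * x) • f (rexp (-x))‖ ^ 2 = ∫ y in Ioi 0, y ^ (2 * c - 1) * ‖f y‖ ^ 2 := by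
  simp_rw [← exp_neg_mul_rpow_mul_norm_sq_comp_exp_neg f c]
  exact integral_exp_neg_smul_comp_exp_neg fun y => y ^ (2 * c - 1) * ‖f y‖ ^ 2

variable {f : ℝ → E} {c : ℝ}

theorem MellinConvergent.integrable_exp_smul_comp_exp_neg (hf : MellinConvergent f c) :
    Integrable (fun x => rexp (-c * x) • f (rexp (-x))) := by
  simpa only [exp_neg_smul_cpow_smul_comp_exp_neg] using
    (integrable_exp_neg_smul_comp_exp_neg_iff _).2 hf

theorem mellinConvergent_iff_of_re_eq (hfm : AEStronglyMeasurable f (volume.restrict (Ioi 0)))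
    {s s' : ℂ} (h : s.re = s'.re) : MellinConvergent f s ↔ MellinConvergent f s' := by
  rw [MellinConvergent, MellinConvergent,
    mellin_convergent_iff_norm subset_rfl measurableSet_Ioi hfm,
    mellin_convergent_iff_norm subset_rfl measurableSet_Ioi hfm, h]

end Mellin

section MellinPlancherel

variable {E : Type*} [NormedAddCommGroup E] [InnerProductSpace ℂ E] [CompleteSpace E]
  {f : ℝ → E} {c : ℝ}

theorem integral_norm_sq_mellin (hf : MellinConvergent f c)
    (hf2 : IntegrableOn (fun y => y ^ (2 * c - 1) * ‖f y‖ ^ 2) (Ioi 0)) :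
    ∫ t : ℝ, ‖mellin f (c + 2 * π * t * I)‖ ^ 2 = ∫ y in Ioi 0, y ^ (2 * c - 1) * ‖f y‖ ^ 2 := by
  set u : ℝ → E := fun x => rexp (-c * x) • f (rexp (-x))
  have hu : Integrable u := hf.integrable_exp_smul_comp_exp_neg
  have hu2 : MemLp u 2 := by
    rw [memLp_two_iff_integrable_sq_norm hu.1]
    simp_rw [u, ← exp_neg_mul_rpow_mul_norm_sq_comp_exp_neg f c]
    exact (integrable_exp_neg_smul_comp_exp_neg_iff _).2 hf2
  have hmellin (t : ℝ) : mellin f (c + 2 * π * t * I) = 𝓕 u t := by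
    have hre : (c + 2 * π * t * I).re = c := by simp
    have him : (c + 2 * π * t * I).im / (2 * π) = t := by simp [field]
    rw [mellin_eq_fourier, hre, him]
  simp_rw [hmellin]
  rw [integral_norm_sq_fourier hu hu2]
  exact integral_norm_sq_exp_smul_comp_exp_neg f c

theorem integral_norm_sq_mellin_le (hfm : AEStronglyMeasurable f (volume.restrict (Ioi 0)))
    (hf2 : IntegrableOn (fun y => y ^ (2 * c - 1) * ‖f y‖ ^ 2) (Ioi 0)) :
    ∫ t : ℝ, ‖mellin f (c + 2 * π * t * I)‖ ^ 2 ≤ ∫ y in Ioi 0, y ^ (2 * c - 1) * ‖f y‖ ^ 2 := by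
  by_cases hf : MellinConvergent f c
  · exact (integral_norm_sq_mellin hf hf2).le
  -- Off the convergence region `mellin` takes the junk value `0` on the whole line.
  have hzero (t : ℝ) : mellin f (c + 2 * π * t * I) = 0 :=
    integral_undef fun ht => hf ((mellinConvergent_iff_of_re_eq hfm (by simp)).1 ht)
  simp only [hzero, norm_zero, zero_pow two_ne_zero, integral_zero]
  exact setIntegral_nonneg measurableSet_Ioi fun y hy =>
    mul_nonneg (Real.rpow_nonneg (le_of_lt hy) _) (by positivity)

end MellinPlancherel

theorem stmt5_general (c G : ℝ) (g h : ℝ → ℝ)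
    (hmg : Measurable g) (hgpos : ∀ y ∈ Ioi (0:ℝ), 0 ≤ g y)
    (hG : ∀ᵐ y ∂(volume.restrict (Ioi (0:ℝ))), y ^ (2*c - 1) * g y ≤ G)
    (hmh : Measurable h)
    (hmom : IntegrableOn (fun y => g y * h y ^ 2) (Ioi 0)) :
    (∫ t : ℝ,
        ‖∫ y in Ioi (0:ℝ),
            (g y : ℂ) * (y : ℂ) ^ ((c : ℂ) - 1 + 2 * (Real.pi : ℂ) * (t : ℂ) * Complex.I) *
              (h y : ℂ)‖ ^ 2) ≤
      G * ∫ y in Ioi (0:ℝ), g y * h y ^ 2 := by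
  set f : ℝ → ℂ := fun y => ((g y * h y : ℝ) : ℂ)
  have hmellin (t : ℝ) : ∫ y in Ioi (0:ℝ),
      (g y : ℂ) * (y : ℂ) ^ ((c : ℂ) - 1 + 2 * (π : ℂ) * (t : ℂ) * I) * (h y : ℂ)
        = mellin f (c + 2 * π * t * I) := by
    refine integral_congr_ae (ae_of_all _ fun y => ?_)
    simp only [f, smul_eq_mul]
    push_cast
    ring_nf
  have hnorm (y : ℝ) : y ^ (2 * c - 1) * ‖f y‖ ^ 2 = (y ^ (2 * c - 1) * g y) * (g y * h y ^ 2) := by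
    rw [Complex.norm_real, Real.norm_eq_abs, sq_abs]
    ring
  have hbound : ∀ᵐ y ∂(volume.restrict (Ioi (0:ℝ))),
      y ^ (2 * c - 1) * ‖f y‖ ^ 2 ≤ G * (g y * h y ^ 2) := by
    filter_upwards [hG, ae_restrict_mem measurableSet_Ioi] with y hyG hy
    rw [hnorm]
    exact mul_le_mul_of_nonneg_right hyG (mul_nonneg (hgpos y hy) (sq_nonneg _))
  have hfm : Measurable f := by fun_prop
  have hf2 : IntegrableOn (fun y => y ^ (2 * c - 1) * ‖f y‖ ^ 2) (Ioi 0) := by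
    refine (hmom.const_mul G).mono' (by fun_prop) ?_
    filter_upwards [hbound, ae_restrict_mem measurableSet_Ioi] with y hyb hy
    rwa [Real.norm_of_nonneg (mul_nonneg (Real.rpow_nonneg (le_of_lt hy) _) (by positivity))]
  calc _ = ∫ t : ℝ, ‖mellin f (c + 2 * π * t * I)‖ ^ 2 := by simp_rw [hmellin]
    _ ≤ ∫ y in Ioi 0, y ^ (2 * c - 1) * ‖f y‖ ^ 2 :=
      integral_norm_sq_mellin_le hfm.aestronglyMeasurable hf2
    _ ≤ ∫ y in Ioi 0, G * (g y * h y ^ 2) := integral_mono_ae hf2 (hmom.const_mul G) hbound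
    _ = G * ∫ y in Ioi (0:ℝ), g y * h y ^ 2 := integral_const_mul G _

/-- If `Y` has density `g` on `(0,∞)` with `ess sup y^(2c-1) g(y) ≤ G < ∞`
(expressed by an a.e. bound) and `h : (0,∞) → ℝ` is measurable with `E[h(Y)²] < ∞`, then
`∫_ℝ |E[Y^(c-1+2πit) h(Y)]|² dt ≤ G · E[h(Y)²]`. -/
theorem stmt5 (c G : ℝ) (g h : ℝ → ℝ)
    (hmg : Measurable g) (hgpos : ∀ y ∈ Ioi (0:ℝ), 0 ≤ g y)
    (hprob : (∫ y in Ioi (0:ℝ), g y) = 1)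
    (hG : ∀ᵐ y ∂(volume.restrict (Ioi (0:ℝ))), y ^ (2*c - 1) * g y ≤ G)
    (hmh : Measurable h)
    (hmom : IntegrableOn (fun y => g y * h y ^ 2) (Ioi 0)) :
    (∫ t : ℝ,
        ‖∫ y in Ioi (0:ℝ),
            (g y : ℂ) * (y : ℂ) ^ ((c : ℂ) - 1 + 2 * (Real.pi : ℂ) * (t : ℂ) * Complex.I) *
              (h y : ℂ)‖ ^ 2) ≤
      G * ∫ y in Ioi (0:ℝ), g y * h y ^ 2 :=
  stmt5_general c G g h hmg hgpos hG hmh hmom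
end

section
/- Let Y₁,…,Yₙ be iid random variables on (0,∞) with density f_Y, c ∈ ℝ, and suppose M_c[f_U](t) ≠ 0 for all t. Define for k > 0 the statistic θ̂_k := (1/(n(n-1))) Σ_{j≠l} ∫_{-k}^k Y_j^{c-1+2πit} Y_l^{c-1-2πit} ω²(t) / |M_c[f_U](t)|² dt, where ω² is an integrable nonnegative weight making the integral well-defined. Then E[θ̂_k] = ∫_{-k}^k |M_c[f_X](t)|² ω²(t) dt, where M_c[f_X](t) = M_c[f_Y](t)/M_c[f_U](t). -/
/-!
For `j ≠ l` the variables `Y j`, `Y l` are independent with the common law `f_Y(y) dy`, so with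
`s = c - 1 + 2πit` the expectation of `Y_j^s · Y_l^{s̄}` factorises as
`M_c[f_Y](t) · conj M_c[f_Y](t) = |M_c[f_Y](t)|²`. The moment `E[Y^{c-1}] < ∞` dominates the
integrand by `Y_j^{c-1} Y_l^{c-1} |w(t)| / |M_c[f_U](t)|²`, which is integrable on `Ω × [-k, k]`
by independence, so Fubini moves the expectation inside the `t`-integral. All `n(n-1)`
off-diagonal terms then have the same expectation, and the normalisation cancels their number.
-/

open MeasureTheory ProbabilityTheory Set

/-- Mellin transform (parameter `c`) of a real-valued function on `(0,∞)`. -/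
noncomputable def mellinT (c : ℝ) (f : ℝ → ℝ) (t : ℝ) : ℂ :=
  ∫ x in Ioi (0:ℝ), (f x : ℂ) * (x : ℂ) ^ ((c : ℂ) - 1 + 2 * (Real.pi : ℂ) * (t : ℂ) * Complex.I)

open ComplexConjugate

lemma Complex.ofReal_cpow_conj {x : ℝ} (hx : 0 ≤ x) (s : ℂ) :
    (x : ℂ) ^ conj s = conj ((x : ℂ) ^ s) := by
  rw [Complex.cpow_conj _ _ (by simp [Complex.arg_ofReal_of_nonneg hx, Real.pi_ne_zero.symm]),
    Complex.conj_ofReal]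

lemma integral_ofReal_cpow_conj {μ : Measure ℝ} (hμ : ∀ᵐ x ∂μ, 0 ≤ x) (s : ℂ) :
    ∫ x, (x : ℂ) ^ conj s ∂μ = conj (∫ x, (x : ℂ) ^ s ∂μ) := by
  rw [← integral_conj]
  exact integral_congr_ae (hμ.mono fun x hx => Complex.ofReal_cpow_conj hx s)

section Density

variable {α E : Type*} [MeasurableSpace α] [NormedAddCommGroup E] [NormedSpace ℝ E]
  {μ : Measure α} {f : α → ℝ}

lemma integral_withDensity_ofReal (hf : AEMeasurable f μ) (hf0 : 0 ≤ᵐ[μ] f) (g : α → E) :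
    ∫ x, g x ∂μ.withDensity (fun x => ENNReal.ofReal (f x)) = ∫ x, f x • g x ∂μ := by
  rw [integral_withDensity_eq_integral_toReal_smul₀ hf.ennreal_ofReal
    (ae_of_all _ fun _ => ENNReal.ofReal_lt_top)]
  exact integral_congr_ae (hf0.mono fun x hx => by simp only [ENNReal.toReal_ofReal hx])

lemma integrable_withDensity_ofReal_iff (hf : AEMeasurable f μ) (hf0 : 0 ≤ᵐ[μ] f) {g : α → E} :
    Integrable g (μ.withDensity (fun x => ENNReal.ofReal (f x))) ↔
      Integrable (fun x => f x • g x) μ := by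
  rw [integrable_withDensity_iff_integrable_smul₀' hf.ennreal_ofReal
    (ae_of_all _ fun _ => ENNReal.ofReal_lt_top)]
  exact integrable_congr (hf0.mono fun x hx => by simp only [ENNReal.toReal_ofReal hx])

end Density

namespace ProbabilityTheory

variable {Ω T : Type*} [MeasurableSpace Ω] [MeasurableSpace T] {P : Measure Ω} {ν : Measure T}
  {X Y : Ω → ℝ} {μ : Measure ℝ}

lemma IndepFun.integral_cpow_mul_cpow_conj (hXY : X ⟂ᵢ[P] Y) (hX : Measurable X)
    (hY : Measurable Y) (hXμ : P.map X = μ) (hYμ : P.map Y = μ) (hμ : ∀ᵐ x ∂μ, 0 ≤ x) (s : ℂ) :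
    ∫ ω, (X ω : ℂ) ^ s * (Y ω : ℂ) ^ conj s ∂P = ((‖∫ x, (x : ℂ) ^ s ∂μ‖ ^ 2 : ℝ) : ℂ) := by
  have hpow : ∀ z : ℂ, Measurable fun x : ℝ => (x : ℂ) ^ z := fun _ => by fun_prop
  rw [hXY.integral_fun_comp_mul_comp hX.aemeasurable hY.aemeasurable
      (hpow _).aestronglyMeasurable (hpow _).aestronglyMeasurable,
    ← integral_map hX.aemeasurable (hpow _).aestronglyMeasurable,
    ← integral_map hY.aemeasurable (hpow _).aestronglyMeasurable, hXμ, hYμ,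
    integral_ofReal_cpow_conj hμ, Complex.mul_conj', Complex.ofReal_pow]

variable {s : T → ℂ} {σ : ℝ} {h : T → ℝ}

lemma IndepFun.integrable_prod_cpow_mul_cpow_conj_mul (hXY : X ⟂ᵢ[P] Y) (hX : Measurable X)
    (hY : Measurable Y) (hXμ : P.map X = μ) (hYμ : P.map Y = μ) (hμ : ∀ᵐ x ∂μ, 0 < x)
    (hs : Measurable s) (hsσ : ∀ t, (s t).re = σ) (hmom : Integrable (fun x => x ^ σ) μ)
    (hh : Integrable h ν) :
    Integrable (fun p : Ω × T => (X p.1 : ℂ) ^ s p.2 * (Y p.1 : ℂ) ^ conj (s p.2) * (h p.2 : ℂ))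
      (P.prod ν) := by
  have hZmom : ∀ {Z : Ω → ℝ}, Measurable Z → P.map Z = μ → Integrable (fun ω => Z ω ^ σ) P :=
    fun hZ hZμ => (integrable_map_measure (g := fun x : ℝ => x ^ σ) (by fun_prop)
      hZ.aemeasurable).mp (hZμ ▸ hmom)
  have hZpos : ∀ {Z : Ω → ℝ}, Measurable Z → P.map Z = μ → ∀ᵐ ω ∂P, 0 < Z ω :=
    fun hZ hZμ => ae_of_ae_map hZ.aemeasurable (hZμ ▸ hμ)
  have hbound : Integrable (fun p : Ω × T => (X p.1 ^ σ * Y p.1 ^ σ) * ‖h p.2‖) (P.prod ν) :=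
    Integrable.mul_prod ((hXY.comp (φ := fun x : ℝ => x ^ σ) (ψ := fun x : ℝ => x ^ σ)
      (by fun_prop) (by fun_prop)).integrable_mul (hZmom hX hXμ) (hZmom hY hYμ)) hh.norm
  have hmeas : Measurable fun p : Ω × T => (X p.1 : ℂ) ^ s p.2 * (Y p.1 : ℂ) ^ conj (s p.2) := by
    fun_prop
  refine hbound.mono' (hmeas.aestronglyMeasurable.mul
    (Complex.continuous_ofReal.comp_aestronglyMeasurable hh.1.comp_snd)) ?_
  filter_upwards [Measure.quasiMeasurePreserving_fst.ae ((hZpos hX hXμ).and (hZpos hY hYμ))]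
    with p ⟨hXp, hYp⟩
  rw [norm_mul, norm_mul, Complex.norm_real, Complex.norm_cpow_eq_rpow_re_of_pos hXp,
    Complex.norm_cpow_eq_rpow_re_of_pos hYp, Complex.conj_re, hsσ]

lemma IndepFun.integral_integral_cpow_mul_cpow_conj_mul [SFinite P] [SFinite ν]
    (hXY : X ⟂ᵢ[P] Y) (hX : Measurable X) (hY : Measurable Y) (hXμ : P.map X = μ)
    (hYμ : P.map Y = μ) (hμ : ∀ᵐ x ∂μ, 0 < x)
    (hs : Measurable s) (hsσ : ∀ t, (s t).re = σ) (hmom : Integrable (fun x => x ^ σ) μ)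
    (hh : Integrable h ν) :
    ∫ ω, ∫ t, (X ω : ℂ) ^ s t * (Y ω : ℂ) ^ conj (s t) * (h t : ℂ) ∂ν ∂P =
      ((∫ t, ‖∫ x, (x : ℂ) ^ s t ∂μ‖ ^ 2 * h t ∂ν : ℝ) : ℂ) := by
  rw [integral_integral_swap (hXY.integrable_prod_cpow_mul_cpow_conj_mul hX hY hXμ hYμ hμ hs hsσ
    hmom hh), ← integral_complex_ofReal]
  congr 1 with t
  rw [integral_mul_const, hXY.integral_cpow_mul_cpow_conj hX hY hXμ hYμ
    (hμ.mono fun _ => le_of_lt), Complex.ofReal_mul]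

end ProbabilityTheory

lemma integral_offDiag_average_eq {Ω : Type*} [MeasurableSpace Ω] {P : Measure Ω} {n : ℕ}
    (hn : 2 ≤ n) {Z : Fin n → Fin n → Ω → ℂ} {I : ℂ}
    (hZ : ∀ j l, j ≠ l → Integrable (Z j l) P ∧ ∫ ω, Z j l ω ∂P = I) :
    ∫ ω, ((1 / (n * (n - 1) : ℝ) : ℝ) : ℂ) * ∑ j, ∑ l, (if j ≠ l then Z j l ω else 0) ∂P = I := by
  have hint : ∀ j l, Integrable (fun ω => if j ≠ l then Z j l ω else 0) P := fun j l => by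
    split_ifs with hjl
    exacts [(hZ j l hjl).1, integrable_zero _ _ _]
  have hterm : ∀ j l, ∫ ω, (if j ≠ l then Z j l ω else 0) ∂P = if j ≠ l then I else 0 :=
    fun j l => by
      split_ifs with hjl
      exacts [(hZ j l hjl).2, integral_zero _ _]
  have hrow : ∀ j : Fin n, ∑ l, (if j ≠ l then I else 0) = (n - 1 : ℂ) * I := fun j => by
    rw [Finset.sum_ite, Finset.sum_const, Finset.sum_const_zero, add_zero, Finset.filter_ne,
      Finset.card_erase_of_mem (Finset.mem_univ j), Finset.card_univ, Fintype.card_fin,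
      nsmul_eq_mul, Nat.cast_sub (by omega : 1 ≤ n), Nat.cast_one]
  have hsum : ∫ ω, ∑ j, ∑ l, (if j ≠ l then Z j l ω else 0) ∂P = n * (n - 1) * I := by
    rw [integral_finsetSum _ fun j _ => integrable_finsetSum _ fun l _ => hint j l]
    simp only [integral_finsetSum _ fun l _ => hint _ l, hterm, hrow, Finset.sum_const,
      Finset.card_univ, Fintype.card_fin, nsmul_eq_mul, mul_assoc]
  have hn0 : (n : ℂ) ≠ 0 := Nat.cast_ne_zero.mpr (by omega)
  have hn1 : (n : ℂ) - 1 ≠ 0 := sub_ne_zero.mpr (by exact_mod_cast (by omega : n ≠ 1))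
  rw [integral_const_mul, hsum]
  push_cast
  field_simp

theorem stmt11_general {Ω : Type*} [MeasureSpace Ω] [IsProbabilityMeasure (ℙ : Measure Ω)]
    (n : ℕ) (hn : 2 ≤ n) (c k : ℝ) (hk : 0 < k)
    (fY fU : ℝ → ℝ) (w : ℝ → ℝ) (Y : Fin n → Ω → ℝ)
    (hmfY : Measurable fY) (hfYpos : ∀ y ∈ Ioi (0:ℝ), 0 ≤ fY y)
    (hmY : ∀ j, Measurable (Y j))
    (hindep : iIndepFun Y ℙ)
    (hlaw : ∀ j, Measure.map (Y j) ℙ =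
      (volume.restrict (Ioi (0:ℝ))).withDensity (fun y => ENNReal.ofReal (fY y)))
    (hwint : IntegrableOn (fun t => w t / ‖mellinT c fU t‖ ^ 2) (Icc (-k) k))
    (hmom : IntegrableOn (fun y => fY y * y ^ (c - 1)) (Ioi 0)) :
    (∫ ω, ((1 / (n * (n - 1) : ℝ) : ℝ) : ℂ) *
        ∑ j, ∑ l, if j ≠ l then
          ∫ t in (-k)..k,
            (Y j ω : ℂ) ^ ((c : ℂ) - 1 + 2 * (Real.pi : ℂ) * (t : ℂ) * Complex.I) *
              (Y l ω : ℂ) ^ ((c : ℂ) - 1 - 2 * (Real.pi : ℂ) * (t : ℂ) * Complex.I) *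
              ((w t / ‖mellinT c fU t‖ ^ 2 : ℝ) : ℂ)
          else 0) =
      ((∫ t in (-k)..k, ‖mellinT c fY t / mellinT c fU t‖ ^ 2 * w t : ℝ) : ℂ) := by
  set μ : Measure ℝ := (volume.restrict (Ioi (0:ℝ))).withDensity (fun y => ENNReal.ofReal (fY y))
  set s : ℝ → ℂ := fun t => (c : ℂ) - 1 + 2 * (Real.pi : ℂ) * (t : ℂ) * Complex.I
  have hs : Measurable s := by fun_prop
  have hs_re : ∀ t, (s t).re = c - 1 := fun t => by simp [s]
  have hconj : ∀ t : ℝ, (c : ℂ) - 1 - 2 * (Real.pi : ℂ) * (t : ℂ) * Complex.I = conj (s t) :=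
    fun t => by simp [s, Complex.ext_iff]
  have hfY0 : 0 ≤ᵐ[volume.restrict (Ioi 0)] fY :=
    ae_restrict_of_forall_mem measurableSet_Ioi hfYpos
  have hμpos : ∀ᵐ x ∂μ, 0 < x :=
    (withDensity_absolutelyContinuous _ _).ae_le (ae_restrict_mem measurableSet_Ioi)
  have hmomμ : Integrable (fun x => x ^ (c - 1)) μ :=
    (integrable_withDensity_ofReal_iff hmfY.aemeasurable hfY0).2 hmom
  have hMY : ∀ t, mellinT c fY t = ∫ x, (x : ℂ) ^ s t ∂μ := fun t => by
    simp only [μ, integral_withDensity_ofReal hmfY.aemeasurable hfY0, mellinT, Complex.real_smul,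
      s]
  have hwIoc := hwint.mono_set Ioc_subset_Icc_self
  simp_rw [hconj, intervalIntegral.integral_of_le (neg_le_self hk.le)]
  refine integral_offDiag_average_eq hn fun j l hjl => ⟨?_, ?_⟩
  · exact (hindep.indepFun hjl).integrable_prod_cpow_mul_cpow_conj_mul (hmY j) (hmY l) (hlaw j)
      (hlaw l) hμpos hs hs_re hmomμ hwIoc |>.integral_prod_left
  · rw [(hindep.indepFun hjl).integral_integral_cpow_mul_cpow_conj_mul (hmY j) (hmY l) (hlaw j)
      (hlaw l) hμpos hs hs_re hmomμ hwIoc]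
    congr 2 with t
    rw [hMY t, norm_div, div_pow]
    ring

/-- The spectral cut-off estimator `θ̂_k` is unbiased for
`∫_{-k}^k |M_c[f_X](t)|² ω²(t) dt` where `M_c[f_X] = M_c[f_Y]/M_c[f_U]`. -/
theorem stmt11 {Ω : Type*} [MeasureSpace Ω] [IsProbabilityMeasure (ℙ : Measure Ω)]
    (n : ℕ) (hn : 2 ≤ n) (c k : ℝ) (hk : 0 < k)
    (fY fU : ℝ → ℝ) (w : ℝ → ℝ) (Y : Fin n → Ω → ℝ)
    (hmfY : Measurable fY) (hfYpos : ∀ y ∈ Ioi (0:ℝ), 0 ≤ fY y)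
    (hprob : (∫ y in Ioi (0:ℝ), fY y) = 1)
    (hmY : ∀ j, Measurable (Y j))
    (hindep : iIndepFun Y ℙ)
    (hlaw : ∀ j, Measure.map (Y j) ℙ =
      (volume.restrict (Ioi (0:ℝ))).withDensity (fun y => ENNReal.ofReal (fY y)))
    (hMU : ∀ t : ℝ, mellinT c fU t ≠ 0)
    (hmw : Measurable w) (hwpos : ∀ t, 0 ≤ w t)
    (hwint : IntegrableOn (fun t => w t / ‖mellinT c fU t‖ ^ 2) (Icc (-k) k))
    (hmom : IntegrableOn (fun y => fY y * y ^ (c - 1)) (Ioi 0)) :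
    (∫ ω, ((1 / (n * (n - 1) : ℝ) : ℝ) : ℂ) *
        ∑ j, ∑ l, if j ≠ l then
          ∫ t in (-k)..k,
            (Y j ω : ℂ) ^ ((c : ℂ) - 1 + 2 * (Real.pi : ℂ) * (t : ℂ) * Complex.I) *
              (Y l ω : ℂ) ^ ((c : ℂ) - 1 - 2 * (Real.pi : ℂ) * (t : ℂ) * Complex.I) *
              ((w t / ‖mellinT c fU t‖ ^ 2 : ℝ) : ℂ)
          else 0) =
      ((∫ t in (-k)..k, ‖mellinT c fY t / mellinT c fU t‖ ^ 2 * w t : ℝ) : ℂ) :=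
  stmt11_general n hn c k hk fY fU w Y hmfY hfYpos hmY hindep hlaw hwint hmom
end

section
/- Let A(k) := max_{k' ∈ [M]} ( |θ̂_{k∧k'} − θ̂_{k'}|² − V(k') − V(k) )₊ for a family of real numbers (θ̂_k)_{k∈[M]} and nonnegative penalties (V(k))_{k∈[M]}, and let k̂ := argmin_{k∈[M]} (A(k) + V(k)). Then for every k ∈ [M] and target θ ∈ ℝ: |θ̂_{k̂} − θ|² ≤ 4 A(k) + 4 V(k) + 2 |θ̂_k − θ|². -/
open Finset

/-! The selected index `k̂` is compared with a fixed `k` through the single test term with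
`k' = max k k̂`: its definition bounds `‖θ̂_{k̂} − θ̂_k‖²` by `A + V` at the smaller index plus
`V` at the larger one, and minimality of `k̂` trades the terms at `k̂` for terms at `k`.
The oracle inequality then follows from `‖a − c‖² ≤ 2‖a − b‖² + 2‖b − c‖²`. -/

section Lepski

variable {ι E : Type*} [LinearOrder ι] [SeminormedAddCommGroup E]

theorem sq_norm_sub_le_two_mul_add (a b c : E) :
    ‖a - c‖ ^ 2 ≤ 2 * ‖a - b‖ ^ 2 + 2 * ‖b - c‖ ^ 2 := by
  calc ‖a - c‖ ^ 2 ≤ (‖a - b‖ + ‖b - c‖) ^ 2 := by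
        gcongr; exact norm_sub_le_norm_sub_add_norm_sub a b c
    _ ≤ 2 * ‖a - b‖ ^ 2 + 2 * ‖b - c‖ ^ 2 := by
        linarith [add_sq_le (a := ‖a - b‖) (b := ‖b - c‖)]

variable {θhat : ι → E} {V A : ι → ℝ} {s : Set ι}

theorem lepski_sq_norm_sub_le
    (hA : ∀ j, ∀ j' ∈ s, ‖θhat (min j j') - θhat j'‖ ^ 2 - V j' - V j ≤ A j)
    (hA_nonneg : ∀ j, 0 ≤ A j) {k khat : ι} (hk : k ∈ s) (hkhat : khat ∈ s)
    (hmin : A khat + V khat ≤ A k + V k) :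
    ‖θhat khat - θhat k‖ ^ 2 ≤ 2 * A k + 2 * V k := by
  rcases le_total khat k with h | h
  · have := hA khat k hk
    rw [min_eq_left h] at this
    linarith [hA_nonneg k]
  · have := hA k khat hkhat
    rw [min_eq_left h, norm_sub_rev] at this
    linarith [hA_nonneg khat]

theorem lepski_oracle_ineq
    (hA : ∀ j, ∀ j' ∈ s, ‖θhat (min j j') - θhat j'‖ ^ 2 - V j' - V j ≤ A j)
    (hA_nonneg : ∀ j, 0 ≤ A j) {k khat : ι} (hk : k ∈ s) (hkhat : khat ∈ s)
    (hmin : A khat + V khat ≤ A k + V k) (θ : E) :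
    ‖θhat khat - θ‖ ^ 2 ≤ 4 * A k + 4 * V k + 2 * ‖θhat k - θ‖ ^ 2 := by
  linarith [sq_norm_sub_le_two_mul_add (θhat khat) (θhat k) θ,
    lepski_sq_norm_sub_le hA hA_nonneg hk hkhat hmin]

end Lepski

theorem stmt18_general (M : ℕ) (hM : 1 ≤ M) (θhat V : ℕ → ℝ)
    (A : ℕ → ℝ)
    (hA : ∀ k, A k = (Finset.Icc 1 M).sup'
      (Finset.nonempty_Icc.mpr hM)
      (fun k' => max (|θhat (min k k') - θhat k'| ^ 2 - V k' - V k) 0))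
    (khat : ℕ) (hkhat : khat ∈ Finset.Icc 1 M)
    (hmin : ∀ k ∈ Finset.Icc 1 M, A khat + V khat ≤ A k + V k) :
    ∀ k ∈ Finset.Icc 1 M, ∀ θ : ℝ,
      |θhat khat - θ| ^ 2 ≤ 4 * A k + 4 * V k + 2 * |θhat k - θ| ^ 2 := by
  intro k hk θ
  have hA_ge : ∀ j, ∀ j' ∈ (Finset.Icc 1 M : Set ℕ),
      ‖θhat (min j j') - θhat j'‖ ^ 2 - V j' - V j ≤ A j := fun j j' hj' => by
    rw [Real.norm_eq_abs, hA j]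
    exact le_sup'_of_le _ (mem_coe.mp hj') (le_max_left _ _)
  have hA_nonneg : ∀ j, 0 ≤ A j := fun j =>
    hA j ▸ le_sup'_of_le _ (left_mem_Icc.mpr hM) (le_max_right _ _)
  simpa only [Real.norm_eq_abs] using
    lepski_oracle_ineq hA_ge hA_nonneg hk hkhat (hmin k hk) θ

/-- The Goldenshluger–Lepski oracle inequality for the selected index:
for `A(k) = max_{k'∈[M]} (|θ̂_{k∧k'} − θ̂_{k'}|² − V(k') − V(k))₊` and any minimizer `k̂` of
`A(k) + V(k)` over `[M]`, one has `|θ̂_{k̂} − θ|² ≤ 4A(k) + 4V(k) + 2|θ̂_k − θ|²`. -/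
theorem stmt18 (M : ℕ) (hM : 1 ≤ M) (θhat V : ℕ → ℝ)
    (hV : ∀ k ∈ Finset.Icc 1 M, 0 ≤ V k)
    (A : ℕ → ℝ)
    (hA : ∀ k, A k = (Finset.Icc 1 M).sup'
      (Finset.nonempty_Icc.mpr hM)
      (fun k' => max (|θhat (min k k') - θhat k'| ^ 2 - V k' - V k) 0))
    (khat : ℕ) (hkhat : khat ∈ Finset.Icc 1 M)
    (hmin : ∀ k ∈ Finset.Icc 1 M, A khat + V khat ≤ A k + V k) :
    ∀ k ∈ Finset.Icc 1 M, ∀ θ : ℝ,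
      |θhat khat - θ| ^ 2 ≤ 4 * A k + 4 * V k + 2 * |θhat k - θ| ^ 2 :=
  stmt18_general M hM θhat V A hA khat hkhat hmin
end
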